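/- Let z : [0,∞) → ℝ_+^I be a fluid model solution (continuous, ‖z(t)‖_1 bounded away from 0 on [δ,∞) for each δ>0, satisfying the multistage PS fluid ODEs). If z(0) ≠ 0, then z is the unique such solution with that initial state; uniqueness follows since the vector field (λ − μ_1 z_1/‖z‖_1 − ν z_1, ..., μ_{I-1}z_{I-1}/‖z‖_1 − μ_I z_I/‖z‖_1 − ν z_I) is Lipschitz continuous on {z ∈ ℝ_+^I : ‖z‖_1 ≥ a} for each a > 0. -/

import Mathlib

/-!
The vector field of the fluid ODEs is Lipschitz on the nonnegative vectors of mass at least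
`ε > 0`, because each `x ↦ x i / ∑ j, x j` is. A solution started away from the origin keeps its
mass above some such `ε` (near `t = 0` by continuity, later by definition), so two solutions with
the same initial state agree by Grönwall's inequality.
-/

open Set

/-- A fluid model solution of the multistage PS fluid model: continuous on `[0,∞)`,
nonnegative, with `‖z(t)‖₁` bounded away from `0` on `[δ,∞)` for each `δ > 0`, and
satisfying the fluid ODEs `z_1' = λ − μ_1 z_1/‖z‖₁ − ν z_1`,
`z_i' = μ_{i-1} z_{i-1}/‖z‖₁ − μ_i z_i/‖z‖₁ − ν z_i` on `(0,∞)` (`0`-based indices). -/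
def IsFMS (n : ℕ) (lam ν : ℝ) (μ : Fin (n + 1) → ℝ) (z : ℝ → Fin (n + 1) → ℝ) : Prop :=
  (∀ i, ContinuousOn (fun t => z t i) (Set.Ici 0)) ∧
  (∀ t ≥ (0 : ℝ), ∀ i, 0 ≤ z t i) ∧
  (∀ δ > (0 : ℝ), ∃ ε > (0 : ℝ), ∀ t ≥ δ, ε ≤ ∑ i, z t i) ∧
  (∀ t > (0 : ℝ),
    HasDerivAt (fun s => z s 0) (lam - μ 0 * z t 0 / (∑ i, z t i) - ν * z t 0) t) ∧
  (∀ t > (0 : ℝ), ∀ i : Fin (n + 1), i ≠ 0 →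
    HasDerivAt (fun s => z s i)
      (μ (i - 1) * z t (i - 1) / (∑ j, z t j) - μ i * z t i / (∑ j, z t j) - ν * z t i) t)

open Filter Topology Real
open scoped NNReal

section ODE

variable {E : Type*} [NormedAddCommGroup E] [NormedSpace ℝ E]

/-- Grönwall on `[c, t]` gives `dist (f t) (g t) ≤ dist (f c) (g c) * exp (K * (t - c))`, and the
right-hand side tends to `0` as `c → a⁺` by continuity at `a`. -/
theorem ODE_solution_unique_of_hasDerivAt_Ioo {v : ℝ → E → E} {s : ℝ → Set E} {K : ℝ≥0}
    {f g : ℝ → E} {a b : ℝ} (hv : ∀ t ∈ Ioo a b, LipschitzOnWith K (v t) (s t))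
    (hf : ContinuousOn f (Icc a b)) (hf' : ∀ t ∈ Ioo a b, HasDerivAt f (v t (f t)) t)
    (hfs : ∀ t ∈ Ioo a b, f t ∈ s t)
    (hg : ContinuousOn g (Icc a b)) (hg' : ∀ t ∈ Ioo a b, HasDerivAt g (v t (g t)) t)
    (hgs : ∀ t ∈ Ioo a b, g t ∈ s t) (ha : f a = g a) :
    EqOn f g (Icc a b) := by
  intro t ht
  rcases ht.1.eq_or_lt with rfl | hat
  · exact ha
  have hbound : ∀ c ∈ Ioo a t, dist (f t) (g t) ≤ dist (f c) (g c) * exp (K * (t - c)) := by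
    intro c hc
    have hIcc : Icc c t ⊆ Icc a b := Icc_subset_Icc hc.1.le ht.2
    have hIco : Ico c t ⊆ Ioo a b := fun x hx => ⟨hc.1.trans_le hx.1, hx.2.trans_le ht.2⟩
    exact dist_le_of_trajectories_ODE_of_mem (fun x hx => hv x (hIco hx)) (hf.mono hIcc)
      (fun x hx => (hf' x (hIco hx)).hasDerivWithinAt) (fun x hx => hfs x (hIco hx))
      (hg.mono hIcc) (fun x hx => (hg' x (hIco hx)).hasDerivWithinAt)
      (fun x hx => hgs x (hIco hx)) le_rfl t ⟨hc.2.le, le_rfl⟩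
  have haI : a ∈ Icc a b := ⟨le_rfl, hat.le.trans ht.2⟩
  have hcont : ContinuousWithinAt (fun c => dist (f c) (g c) * exp (K * (t - c))) (Icc a b) a :=
    ((hf a haI).dist (hg a haI)).mul
      (by fun_prop : Continuous fun c => exp (K * (t - c))).continuousWithinAt
  have hlim : Tendsto (fun c => dist (f c) (g c) * exp (K * (t - c))) (𝓝[Ioo a t] a) (𝓝 0) := by
    simpa [ha] using (hcont.mono (Ioo_subset_Icc_self.trans (Icc_subset_Icc le_rfl ht.2))).tendsto
  have := left_nhdsWithin_Ioo_neBot hat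
  exact dist_le_zero.1 (ge_of_tendsto hlim (eventually_mem_nhdsWithin.mono hbound))

end ODE

theorem abs_div_sum_sub_div_sum_le {ι : Type*} [Fintype ι] {ε : ℝ} (hε : 0 < ε) {x y : ι → ℝ}
    (hy : ∀ j, 0 ≤ y j) (hεx : ε ≤ ∑ j, x j) (hεy : ε ≤ ∑ j, y j) (i : ι) :
    |x i / ∑ j, x j - y i / ∑ j, y j| ≤ (Fintype.card ι + 1) / ε * ‖x - y‖ := by
  set X := ∑ j, x j
  set Y := ∑ j, y j
  have hX : 0 < X := hε.trans_le hεx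
  have hY : 0 < Y := hε.trans_le hεy
  have hcoord : ∀ j, |x j - y j| ≤ ‖x - y‖ := fun j => by
    simpa using norm_le_pi_norm (x - y) j
  have hsum : |Y - X| ≤ Fintype.card ι * ‖x - y‖ := by
    calc |Y - X| = |∑ j, (x j - y j)| := by rw [abs_sub_comm, Finset.sum_sub_distrib]
      _ ≤ ∑ j, |x j - y j| := Finset.abs_sum_le_sum_abs _ _
      _ ≤ ∑ _j : ι, ‖x - y‖ := Finset.sum_le_sum fun j _ => hcoord j
      _ = Fintype.card ι * ‖x - y‖ := by simp
  have hyi : |y i / Y| ≤ 1 := by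
    rw [abs_of_nonneg (div_nonneg (hy i) hY.le), div_le_one hY]
    exact Finset.single_le_sum (fun j _ => hy j) (Finset.mem_univ i)
  have hsplit : x i / X - y i / Y = ((x i - y i) + y i / Y * (Y - X)) / X := by
    field_simp
    ring
  rw [hsplit, abs_div, abs_of_pos hX, div_le_iff₀ hX]
  calc |x i - y i + y i / Y * (Y - X)|
      ≤ |x i - y i| + |y i / Y| * |Y - X| := by rw [← abs_mul]; exact abs_add_le _ _
    _ ≤ ‖x - y‖ + 1 * (Fintype.card ι * ‖x - y‖) := by gcongr; exact hcoord i
    _ = (Fintype.card ι + 1) / ε * ‖x - y‖ * ε := by field_simp; ring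
    _ ≤ (Fintype.card ι + 1) / ε * ‖x - y‖ * X := by gcongr

/-- The vector field of the fluid ODEs: stage `0` is fed by the arrivals `lam`, stage `i > 0` by
the output of stage `i - 1`. -/
noncomputable def fluidField (n : ℕ) (lam ν : ℝ) (μ : Fin (n + 1) → ℝ) (x : Fin (n + 1) → ℝ) :
    Fin (n + 1) → ℝ := fun i =>
  (if i = 0 then lam else μ (i - 1) * (x (i - 1) / ∑ j, x j)) - μ i * (x i / ∑ j, x j) - ν * x i

theorem exists_lipschitzOnWith_fluidField (n : ℕ) (lam ν : ℝ) (μ : Fin (n + 1) → ℝ) {ε : ℝ}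
    (hε : 0 < ε) :
    ∃ K, LipschitzOnWith K (fluidField n lam ν μ) {x | (∀ i, 0 ≤ x i) ∧ ε ≤ ∑ i, x i} := by
  set M := ∑ j, |μ j|
  set C := (Fintype.card (Fin (n + 1)) + 1) / ε
  refine ⟨_, LipschitzOnWith.of_dist_le' (K := 2 * M * C + |ν|) fun x hx y hy => ?_⟩
  rw [dist_eq_norm, dist_eq_norm]
  refine (pi_norm_le_iff_of_nonneg (by positivity)).2 fun i => ?_
  set rx := fun k => x k / ∑ j, x j
  set ry := fun k => y k / ∑ j, y j
  have hratio : ∀ k, |μ k * (rx k - ry k)| ≤ M * (C * ‖x - y‖) := fun k => by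
    rw [abs_mul]
    exact mul_le_mul (Finset.single_le_sum (fun j _ => abs_nonneg (μ j)) (Finset.mem_univ k))
      (abs_div_sum_sub_div_sum_le hε hy.1 hx.2 hy.2 k) (abs_nonneg _) (by positivity)
  have hinflow : |(if i = 0 then lam else μ (i - 1) * rx (i - 1)) -
      (if i = 0 then lam else μ (i - 1) * ry (i - 1))| ≤ M * (C * ‖x - y‖) := by
    split_ifs
    · rw [sub_self, abs_zero]; positivity
    · rw [← mul_sub]; exact hratio _
  have hdecay : |ν * (x i - y i)| ≤ |ν| * ‖x - y‖ := by
    rw [abs_mul]; gcongr; simpa using norm_le_pi_norm (x - y) i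
  calc ‖fluidField n lam ν μ x i - fluidField n lam ν μ y i‖
      = |((if i = 0 then lam else μ (i - 1) * rx (i - 1)) -
          (if i = 0 then lam else μ (i - 1) * ry (i - 1))) - μ i * (rx i - ry i)
          - ν * (x i - y i)| := by
        rw [Real.norm_eq_abs]; simp only [fluidField, rx, ry]; ring_nf
    _ ≤ M * (C * ‖x - y‖) + M * (C * ‖x - y‖) + |ν| * ‖x - y‖ := by
        refine (abs_sub _ _).trans (add_le_add ((abs_sub _ _).trans ?_) hdecay)
        exact add_le_add hinflow (hratio i)
    _ = (2 * M * C + |ν|) * ‖x - y‖ := by ring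

section FluidModel

variable {n : ℕ} {lam ν : ℝ} {μ : Fin (n + 1) → ℝ} {z : ℝ → Fin (n + 1) → ℝ}

theorem IsFMS.hasDerivAt (hz : IsFMS n lam ν μ z) {t : ℝ} (ht : 0 < t) :
    HasDerivAt z (fluidField n lam ν μ (z t)) t := by
  refine hasDerivAt_pi.2 fun i => ?_
  by_cases hi : i = 0
  · subst hi
    simpa [fluidField, mul_div_assoc] using hz.2.2.2.1 t ht
  · simpa [fluidField, hi, mul_div_assoc] using hz.2.2.2.2 t ht i hi

theorem IsFMS.exists_pos_le_sum (hz : IsFMS n lam ν μ z) (hz0 : z 0 ≠ 0) :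
    ∃ ε > 0, ∀ t ≥ 0, ε ≤ ∑ i, z t i := by
  obtain ⟨hcont, hnonneg, hmass, -⟩ := hz
  obtain ⟨i₀, hi₀⟩ := Function.ne_iff.1 hz0
  have hpos : 0 < ∑ i, z 0 i := Finset.sum_pos' (fun i _ => hnonneg 0 le_rfl i)
    ⟨i₀, Finset.mem_univ _, (hnonneg 0 le_rfl i₀).lt_of_ne' hi₀⟩
  have hnear : ∀ᶠ t in 𝓝[≥] 0, (∑ i, z 0 i) / 2 < ∑ i, z t i :=
    (continuousOn_finsetSum _ (fun i _ => hcont i) 0 self_mem_Ici).eventually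
      (eventually_gt_nhds (half_lt_self hpos))
  obtain ⟨δ, hδ, hδsub⟩ := mem_nhdsGE_iff_exists_Ico_subset.1 hnear
  obtain ⟨ε, hε, hεle⟩ := hmass δ hδ
  refine ⟨min ε ((∑ i, z 0 i) / 2), lt_min hε (half_pos hpos), fun t ht => ?_⟩
  rcases lt_or_ge t δ with htδ | htδ
  · exact (min_le_right _ _).trans (hδsub ⟨ht, htδ⟩).le
  · exact (min_le_left _ _).trans (hεle t htδ)

end FluidModel

theorem fms_unique_nonzero_initial_general (n : ℕ) (lam ν : ℝ)
    (μ : Fin (n + 1) → ℝ)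
    (z w : ℝ → Fin (n + 1) → ℝ)
    (hz : IsFMS n lam ν μ z) (hw : IsFMS n lam ν μ w)
    (hinit : ∀ i, z 0 i = w 0 i) (hne : ∃ i, z 0 i ≠ 0) :
    ∀ t ≥ (0 : ℝ), ∀ i, z t i = w t i := by
  have h0 : z 0 = w 0 := funext hinit
  have hz0 : z 0 ≠ 0 := Function.ne_iff.2 hne
  obtain ⟨εz, hεz, hz_mass⟩ := hz.exists_pos_le_sum hz0
  obtain ⟨εw, hεw, hw_mass⟩ := hw.exists_pos_le_sum (h0 ▸ hz0)
  obtain ⟨K, hK⟩ := exists_lipschitzOnWith_fluidField n lam ν μ (lt_min hεz hεw)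
  intro t ht i
  have hcont : ∀ {u}, IsFMS n lam ν μ u → ContinuousOn u (Icc 0 t) := fun hu =>
    (continuousOn_pi.2 hu.1).mono Icc_subset_Ici_self
  refine congrFun (ODE_solution_unique_of_hasDerivAt_Ioo (v := fun _ => fluidField n lam ν μ)
    (fun _ _ => hK) (hcont hz) (fun s hs => hz.hasDerivAt hs.1) ?_ (hcont hw)
    (fun s hs => hw.hasDerivAt hs.1) ?_ h0 ⟨ht, le_rfl⟩) i
  · exact fun s hs => ⟨hz.2.1 s hs.1.le, (min_le_left _ _).trans (hz_mass s hs.1.le)⟩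
  · exact fun s hs => ⟨hw.2.1 s hs.1.le, (min_le_right _ _).trans (hw_mass s hs.1.le)⟩

/-- a fluid model solution with nonzero initial state is unique (two FMS's
with the same nonzero initial state coincide on `[0,∞)`). -/
theorem fms_unique_nonzero_initial (n : ℕ) (lam ν : ℝ) (hlam : 0 < lam) (hν : 0 < ν)
    (μ : Fin (n + 1) → ℝ) (hμ : ∀ i, 0 < μ i)
    (z w : ℝ → Fin (n + 1) → ℝ)
    (hz : IsFMS n lam ν μ z) (hw : IsFMS n lam ν μ w)
    (hinit : ∀ i, z 0 i = w 0 i) (hne : ∃ i, z 0 i ≠ 0) :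
    ∀ t ≥ (0 : ℝ), ∀ i, z t i = w t i :=
  fms_unique_nonzero_initial_general n lam ν μ z w hz hw hinit hne
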